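/- arXiv:1709.04401 — 3 statements merged into one kernel-verified Lean document; each statement's English description precedes it below -/
import Mathlib

section
/- For N ≥ 3 and 0 ≤ V₀ < (N−1)²/(N+1), one has 2/(N−1−V₀) < p₀(N+V₀), where p₀(n) denotes the positive root of γ(n;p) = 2 + (n+1)p − (n−1)p² = 0. Conversely, if V₀ ≥ (N−1)²/(N+1) (with N−1−V₀ > 0) then 2/(N−1−V₀) ≥ p₀(N+V₀). -/
/-- γ(n;p) = 2 + (n+1)p − (n−1)p² -/
noncomputable def gammaPoly (n p : ℝ) : ℝ := 2 + (n + 1) * p - (n - 1) * p ^ 2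

/-- if `p₀ = p₀(N+V₀)` is the positive root of `γ(N+V₀;·)` and
`0 ≤ V₀ < N−1`, then `2/(N−1−V₀) < p₀` exactly when `V₀ < (N−1)²/(N+1)`,
and `2/(N−1−V₀) ≥ p₀` when `V₀ ≥ (N−1)²/(N+1)`. -/
theorem stmt2 (N V₀ p₀ : ℝ) (hN : 3 ≤ N) (hV0 : 0 ≤ V₀) (hV1 : V₀ < N - 1)
    (hp₀ : 0 < p₀) (hroot : gammaPoly (N + V₀) p₀ = 0) :
    (V₀ < (N - 1) ^ 2 / (N + 1) → 2 / (N - 1 - V₀) < p₀) ∧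
    ((N - 1) ^ 2 / (N + 1) ≤ V₀ → p₀ ≤ 2 / (N - 1 - V₀)) := by
  have hd : 0 < N - 1 - V₀ := by linarith
  have hn1 : 0 < N + V₀ - 1 := by linarith
  have hN1 : (0 : ℝ) < N + 1 := by linarith
  obtain ⟨q, hq⟩ : ∃ q : ℝ, q = 2 / (N - 1 - V₀) := ⟨_, rfl⟩
  rw [← hq]
  have hq0 : 0 < q := by rw [hq]; positivity
  have hqd : q * (N - 1 - V₀) = 2 := by
    rw [hq]; field_simp
  have hroot' : (N + V₀ - 1) * p₀ ^ 2 = 2 + (N + V₀ + 1) * p₀ := by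
    have h := hroot; unfold gammaPoly at h; linarith
  have key : p₀ * (-(gammaPoly (N + V₀) q)) = (q - p₀) * ((N + V₀ - 1) * q * p₀ + 2) := by
    unfold gammaPoly; linear_combination q * hroot'
  have hgq : gammaPoly (N + V₀) q * (N - 1 - V₀) ^ 2 = 4 * ((N - 1) ^ 2 - (N + 1) * V₀) := by
    unfold gammaPoly
    linear_combination ((N + V₀ + 1) * (N - 1 - V₀)
      - (N + V₀ - 1) * (q * (N - 1 - V₀) + 2)) * hqd
  have hbr : 0 < (N + V₀ - 1) * q * p₀ + 2 := by positivity
  have hd2 : 0 < (N - 1 - V₀) ^ 2 := by positivity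
  constructor
  · intro h
    have hV : (N + 1) * V₀ < (N - 1) ^ 2 := by
      have := (mul_lt_mul_iff_right₀ hN1).mpr h
      calc (N + 1) * V₀ < (N + 1) * ((N - 1) ^ 2 / (N + 1)) := this
        _ = (N - 1) ^ 2 := by field_simp
    have hgpos : 0 < gammaPoly (N + V₀) q := by nlinarith
    by_contra hle
    push_neg at hle
    nlinarith [mul_nonneg (sub_nonneg.mpr hle) hbr.le, mul_pos hp₀ hgpos]
  · intro h
    have hV : (N - 1) ^ 2 ≤ (N + 1) * V₀ := by
      have := (mul_le_mul_iff_right₀ hN1).mpr h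
      calc (N - 1) ^ 2 = (N + 1) * ((N - 1) ^ 2 / (N + 1)) := by field_simp
        _ ≤ (N + 1) * V₀ := this
    have hgnp : gammaPoly (N + V₀) q ≤ 0 := by nlinarith
    by_contra hlt
    push_neg at hlt
    nlinarith [mul_pos (sub_pos.mpr hlt) hbr, mul_nonneg hp₀.le (neg_nonneg.mpr hgnp)]
end

section
/- Let G : [0,∞) → ℝ be continuous, and define H(t) = ∫₀ᵗ (t−s)(2+s) G(s) ds and J(t) = ∫₀ᵗ (2+s)⁻³ H(s) ds. Then for every t ≥ 0, (2+t)² J(t) = (1/2) ∫₀ᵗ (t−s)² G(s) ds. -/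
open intervalIntegral

/-- with `H(t) = ∫₀ᵗ (t−s)(2+s)G(s) ds` and
`J(t) = ∫₀ᵗ (2+s)⁻³ H(s) ds`, one has
`(2+t)² J(t) = ½ ∫₀ᵗ (t−s)² G(s) ds` for all `t ≥ 0`. -/
theorem stmt6 (G H J : ℝ → ℝ) (hG : Continuous G)
    (hH : ∀ t : ℝ, H t = ∫ s in (0:ℝ)..t, (t - s) * (2 + s) * G s)
    (hJ : ∀ t : ℝ, J t = ∫ s in (0:ℝ)..t, (2 + s)⁻¹ ^ 3 * H s) :
    ∀ t : ℝ, 0 ≤ t →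
      (2 + t) ^ 2 * J t = (1 / 2) * ∫ s in (0:ℝ)..t, (t - s) ^ 2 * G s := by
  intro t ht
  have ht2 : (2 + t) ≠ 0 := by linarith
  have huIcc : Set.uIcc (0:ℝ) t = Set.Icc 0 t := Set.uIcc_of_le ht
  set K : ℝ → ℝ := fun s => ∫ r in (0:ℝ)..s, (2 + r) * G r with hKdef
  have hKG : Continuous fun r : ℝ => (2 + r) * G r := by continuity
  have hrKG : Continuous fun r : ℝ => r * ((2 + r) * G r) := by continuity
  have hK : ∀ s : ℝ, HasDerivAt K ((2 + s) * G s) s := fun s =>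
    (hKG.integral_hasStrictDerivAt 0 s).hasDerivAt
  have hKcont : Continuous K :=
    continuous_iff_continuousAt.mpr fun s => (hK s).continuousAt
  -- H s = s * K s - ∫ r, r*((2+r)*G r)
  have hHeq : ∀ s : ℝ, H s = s * K s - ∫ r in (0:ℝ)..s, r * ((2 + r) * G r) := by
    intro s
    rw [hH s]
    calc ∫ r in (0:ℝ)..s, (s - r) * (2 + r) * G r
        = ∫ r in (0:ℝ)..s, (s * ((2 + r) * G r) - r * ((2 + r) * G r)) := by
          apply intervalIntegral.integral_congr
          intro r _; ring
      _ = (∫ r in (0:ℝ)..s, s * ((2 + r) * G r)) -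
            ∫ r in (0:ℝ)..s, r * ((2 + r) * G r) :=
          intervalIntegral.integral_sub
            ((continuous_const.mul hKG).intervalIntegrable 0 s)
            (hrKG.intervalIntegrable 0 s)
      _ = s * K s - ∫ r in (0:ℝ)..s, r * ((2 + r) * G r) := by
          rw [intervalIntegral.integral_const_mul]
  have hH' : ∀ s : ℝ, HasDerivAt H (K s) s := by
    intro s
    have h1 : HasDerivAt
        (fun u : ℝ => u * K u - ∫ r in (0:ℝ)..u, r * ((2 + r) * G r))
        (1 * K s + s * ((2 + s) * G s) - s * ((2 + s) * G s)) s :=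
      ((hasDerivAt_id s).mul (hK s)).sub
        ((hrKG.integral_hasStrictDerivAt 0 s).hasDerivAt)
    have hfun : H = fun u : ℝ => u * K u - ∫ r in (0:ℝ)..u, r * ((2 + r) * G r) :=
      funext hHeq
    rw [hfun]
    convert h1 using 1
    ring
  have hHcont : Continuous H :=
    continuous_iff_continuousAt.mpr fun s => (hH' s).continuousAt
  -- auxiliary functions for integration by parts
  set A : ℝ → ℝ := fun s => (2 + t)⁻¹ ^ 2 / 2 - (2 + s)⁻¹ ^ 2 / 2 with hAdef
  set B : ℝ → ℝ := fun s => (2 + t)⁻¹ ^ 2 / 2 * (s - t) + ((2 + s)⁻¹ / 2 - (2 + t)⁻¹ / 2)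
    with hBdef
  have hinv : ∀ x : ℝ, (2 : ℝ) + x ≠ 0 →
      HasDerivAt (fun y : ℝ => (2 + y)⁻¹) (-((2 + x)⁻¹ ^ 2)) x := by
    intro x hx
    have h0 : HasDerivAt (fun y : ℝ => 2 + y) 1 x := (hasDerivAt_id x).const_add 2
    have := h0.fun_inv hx
    refine this.congr_deriv ?_
    field_simp
  have hA : ∀ x ∈ Set.uIcc (0:ℝ) t, HasDerivAt A ((2 + x)⁻¹ ^ 3) x := by
    intro x hx
    rw [huIcc] at hx
    have hx2 : (2 : ℝ) + x ≠ 0 := by have := hx.1; linarith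
    have h1 : HasDerivAt (fun y : ℝ => (2 + y)⁻¹ ^ 2)
        (2 * (2 + x)⁻¹ ^ 1 * (-((2 + x)⁻¹ ^ 2))) x := by
      simpa using (hinv x hx2).fun_pow 2
    have h2 := (h1.div_const 2).const_sub ((2 + t)⁻¹ ^ 2 / 2)
    refine h2.congr_deriv ?_
    ring
  have hB : ∀ x ∈ Set.uIcc (0:ℝ) t, HasDerivAt B (A x) x := by
    intro x hx
    rw [huIcc] at hx
    have hx2 : (2 : ℝ) + x ≠ 0 := by have := hx.1; linarith
    have h1 : HasDerivAt (fun y : ℝ => (2 + t)⁻¹ ^ 2 / 2 * (y - t))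
        ((2 + t)⁻¹ ^ 2 / 2 * 1) x :=
      ((hasDerivAt_id x).sub_const t).const_mul _
    have h2 := ((hinv x hx2).div_const 2).sub_const ((2 + t)⁻¹ / 2)
    have h3 := h1.fun_add h2
    refine h3.congr_deriv ?_
    simp only [hAdef]
    ring
  -- integrability facts
  have hA'int : IntervalIntegrable (fun x : ℝ => (2 + x)⁻¹ ^ 3) MeasureTheory.volume 0 t := by
    apply ContinuousOn.intervalIntegrable
    rw [huIcc]
    apply ContinuousOn.pow
    apply ContinuousOn.inv₀
    · fun_prop
    · intro x hx; have := hx.1; intro h; linarith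
  have hAint : IntervalIntegrable A MeasureTheory.volume 0 t := by
    apply ContinuousOn.intervalIntegrable
    rw [huIcc]
    apply ContinuousOn.sub continuousOn_const
    apply ContinuousOn.div_const
    apply ContinuousOn.pow
    apply ContinuousOn.inv₀
    · fun_prop
    · intro x hx; have := hx.1; intro h; linarith
  -- first integration by parts
  have ibp1 : J t = -∫ x in (0:ℝ)..t, K x * A x := by
    rw [hJ t]
    have h1 : (∫ s in (0:ℝ)..t, (2 + s)⁻¹ ^ 3 * H s)
        = ∫ s in (0:ℝ)..t, H s * (2 + s)⁻¹ ^ 3 := by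
      apply intervalIntegral.integral_congr
      intro s _; ring
    rw [h1]
    rw [intervalIntegral.integral_mul_deriv_eq_deriv_mul
      (u := H) (u' := K) (v := A) (v' := fun x => (2 + x)⁻¹ ^ 3)
      (fun x _ => hH' x) hA (hKcont.intervalIntegrable 0 t) hA'int]
    have hH0 : H 0 = 0 := by rw [hH 0]; simp
    have hAt : A t = 0 := by simp [hAdef]
    rw [hH0, hAt]
    ring
  -- second integration by parts
  have ibp2 : (∫ x in (0:ℝ)..t, K x * A x)
      = -∫ x in (0:ℝ)..t, (2 + x) * G x * B x := by
    rw [intervalIntegral.integral_mul_deriv_eq_deriv_mul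
      (u := K) (u' := fun x => (2 + x) * G x) (v := B) (v' := A)
      (fun x _ => hK x) hB (hKG.intervalIntegrable 0 t) hAint]
    have hK0 : K 0 = 0 := by simp [hKdef]
    have hBt : B t = 0 := by simp [hBdef]
    rw [hK0, hBt]
    ring
  rw [ibp1, ibp2, neg_neg, ← intervalIntegral.integral_const_mul,
    ← intervalIntegral.integral_const_mul]
  apply intervalIntegral.integral_congr
  intro x hx
  rw [huIcc] at hx
  have hx2 : (2 : ℝ) + x ≠ 0 := by have := hx.1; linarith
  simp only [hBdef]
  field_simp
  ring
end

section
/- (Blowup ODE lemma, polynomial version) Let p > 1 and c, C > 0 with additionally a > 1 a constant. Suppose H ∈ C²([σ₀, ∞)) is nonnegative and satisfies C H(σ)^p ≤ H''(σ) + a H'(σ)/σ for σ ≥ σ₀, together with H(σ) ≥ ε^p C σ² and H'(σ) ≥ ε^p C σ for σ ≥ σ₀, where ε > 0. Then H cannot exist (remain finite) on all of [σ₀, ∞) if σ₀ is fixed and ε small; more precisely there exists C'' > 0 (independent of ε) such that H blows up before σ = C'' ε^{−(p−1)/2}. -/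
open Real Set

private lemma mono_aux (f f' : ℝ → ℝ) {x y : ℝ} (hxy : x ≤ y)
    (hf : ∀ σ ∈ Icc x y, HasDerivAt f (f' σ) σ)
    (h0 : ∀ σ ∈ Icc x y, 0 ≤ f' σ) : f x ≤ f y := by
  have hc : ContinuousOn f (Icc x y) := fun σ hσ =>
    (hf σ hσ).continuousAt.continuousWithinAt
  have hd : DifferentiableOn ℝ f (interior (Icc x y)) := by
    intro σ hσ
    rw [interior_Icc] at hσ
    exact ((hf σ (Ioo_subset_Icc_self hσ)).differentiableAt).differentiableWithinAt
  have hmono := monotoneOn_of_deriv_nonneg (convex_Icc x y) hc hd (by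
    intro σ hσ
    rw [interior_Icc] at hσ
    rw [(hf σ (Ioo_subset_Icc_self hσ)).deriv]
    exact h0 σ (Ioo_subset_Icc_self hσ))
  exact hmono (left_mem_Icc.2 hxy) (right_mem_Icc.2 hxy) hxy

private lemma grow_aux (f f' : ℝ → ℝ) (m : ℝ) {x y : ℝ} (hxy : x ≤ y)
    (hf : ∀ σ ∈ Icc x y, HasDerivAt f (f' σ) σ)
    (h0 : ∀ σ ∈ Icc x y, m ≤ f' σ) : f x + m * (y - x) ≤ f y := by
  have h := mono_aux (fun σ => f σ - m * σ) (fun σ => f' σ - m) hxy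
    (fun σ hσ => by
      have h := (hf σ hσ).sub ((hasDerivAt_id' σ).const_mul m); simp only [mul_one] at h; exact h)
    (fun σ hσ => sub_nonneg.2 (h0 σ hσ))
  linarith

private lemma superadd {x y z : ℝ} (hx : 0 < x) (hy : 0 < y) (hz : 1 ≤ z) :
    x ^ z + y ^ z ≤ (x + y) ^ z := by
  have hxy : 0 < x + y := by linarith
  have hx1 : x / (x + y) ≤ 1 := by rw [div_le_one hxy]; linarith
  have hy1 : y / (x + y) ≤ 1 := by rw [div_le_one hxy]; linarith
  have h1 : (x / (x + y)) ^ z ≤ x / (x + y) := by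
    calc (x / (x + y)) ^ z ≤ (x / (x + y)) ^ (1 : ℝ) :=
          Real.rpow_le_rpow_of_exponent_ge (by positivity) hx1 hz
    _ = x / (x + y) := Real.rpow_one _
  have h2 : (y / (x + y)) ^ z ≤ y / (x + y) := by
    calc (y / (x + y)) ^ z ≤ (y / (x + y)) ^ (1 : ℝ) :=
          Real.rpow_le_rpow_of_exponent_ge (by positivity) hy1 hz
    _ = y / (x + y) := Real.rpow_one _
  have ex : (x / (x + y)) ^ z = x ^ z / (x + y) ^ z := Real.div_rpow hx.le hxy.le z
  have ey : (y / (x + y)) ^ z = y ^ z / (x + y) ^ z := Real.div_rpow hy.le hxy.le z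
  have hpz : 0 < (x + y) ^ z := Real.rpow_pos_of_pos hxy z
  rw [ex] at h1
  rw [ey] at h2
  have hsum : x ^ z / (x + y) ^ z + y ^ z / (x + y) ^ z ≤ x / (x + y) + y / (x + y) := by
    linarith
  have hone : x / (x + y) + y / (x + y) = 1 := by field_simp
  rw [hone] at hsum
  calc x ^ z + y ^ z = (x ^ z / (x + y) ^ z + y ^ z / (x + y) ^ z) * (x + y) ^ z := by
        field_simp
  _ ≤ 1 * (x + y) ^ z := mul_le_mul_of_nonneg_right hsum hpz.le
  _ = (x + y) ^ z := one_mul _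

set_option maxHeartbeats 2000000 in
/-- blowup ODE lemma, polynomial version: let `p > 1`, `C > 0`,
`a > 1`, `σ₀ > 0`. There exists `C'' > 0` such that for every `ε ∈ (0,1]`
there is no nonnegative `C²` function `H` on `[σ₀, C'' ε^{−(p−1)/2}]`
satisfying `C H^p ≤ H'' + a H'/σ`, `H(σ) ≥ ε^p C σ²` and `H'(σ) ≥ ε^p C σ`
on that interval; i.e. any such `H` blows up before `σ = C'' ε^{−(p−1)/2}`. -/
theorem stmt18 (p C a σ₀ : ℝ) (hp : 1 < p) (hC : 0 < C) (ha : 1 < a)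
    (hσ₀ : 0 < σ₀) :
    ∃ C'' : ℝ, 0 < C'' ∧ ∀ ε : ℝ, 0 < ε → ε ≤ 1 →
      ¬ ∃ H H' H'' : ℝ → ℝ,
        ∀ σ ∈ Icc σ₀ (C'' * ε ^ (-(p - 1) / 2)),
          HasDerivAt H (H' σ) σ ∧
          HasDerivAt H' (H'' σ) σ ∧
          0 ≤ H σ ∧
          C * H σ ^ p ≤ H'' σ + a * H' σ / σ ∧
          ε ^ p * C * σ ^ 2 ≤ H σ ∧
          ε ^ p * C * σ ≤ H' σ := by
  have hp1 : (1 : ℝ) ≤ p + 1 := by linarith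
  have hp1' : (0 : ℝ) < p + 1 := by linarith
  set β : ℝ := (p - 1) / 2 with hβdef
  have hβ : 0 < β := by rw [hβdef]; linarith
  set q : ℝ := (p + 1) / 2 with hqdef
  set c₁ : ℝ := Real.sqrt (2 * C / (p + 1)) * (1 / 2 : ℝ) ^ a with hc₁def
  have hc₁ : 0 < c₁ := by
    apply mul_pos (Real.sqrt_pos.2 (by positivity))
    exact Real.rpow_pos_of_pos one_half_pos a
  set K : ℝ := β * c₁ * (C / 8) ^ β with hKdef
  have hK : 0 < K := by
    apply mul_pos (mul_pos hβ hc₁)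
    exact Real.rpow_pos_of_pos (by positivity) β
  set C'' : ℝ := max (4 * σ₀) (max 2 (8 / K)) with hC''def
  have hC''σ₀ : 4 * σ₀ ≤ C'' := le_max_left _ _
  have hC''2 : 2 ≤ C'' := le_trans (le_max_left _ _) (le_max_right _ _)
  have hC''K : 8 / K ≤ C'' := le_trans (le_max_right _ _) (le_max_right _ _)
  have hC''pos : 0 < C'' := by linarith
  refine ⟨C'', hC''pos, ?_⟩
  intro ε hε hε1
  rintro ⟨H, H1, H2, hH⟩
  set σ₁ : ℝ := C'' * ε ^ (-(p - 1) / 2) with hσ₁def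
  have hεβ : ε ^ (-(p - 1) / 2) = ε ^ (-β) := by rw [hβdef, neg_div]
  have hE1 : 1 ≤ ε ^ (-β) :=
    Real.one_le_rpow_of_pos_of_le_one_of_nonpos hε hε1 (by linarith)
  have hσ₁C : C'' ≤ σ₁ := by
    rw [hσ₁def, hεβ]
    exact le_mul_of_one_le_right hC''pos.le hE1
  have hσ₁pos : 0 < σ₁ := lt_of_lt_of_le hC''pos hσ₁C
  set τ : ℝ := σ₁ / 2 with hτdef
  set μ : ℝ := 3 * σ₁ / 4 with hμdef
  have hτpos : 0 < τ := by rw [hτdef]; linarith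
  have hστ : σ₀ ≤ τ := by rw [hτdef]; linarith
  have hτμ : τ ≤ μ := by rw [hτdef, hμdef]; linarith
  have hμσ₁ : μ ≤ σ₁ := by rw [hμdef]; linarith
  have hτσ₁ : τ ≤ σ₁ := le_trans hτμ hμσ₁
  have hsub : Icc τ σ₁ ⊆ Icc σ₀ σ₁ := Icc_subset_Icc hστ le_rfl
  -- basic facts on the big interval
  have hεp : 0 < ε ^ p := Real.rpow_pos_of_pos hε p
  have hH1pos : ∀ σ ∈ Icc σ₀ σ₁, 0 < H1 σ := by
    intro σ hσ
    have h := (hH σ hσ).2.2.2.2.2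
    have hσpos : 0 < σ := lt_of_lt_of_le hσ₀ hσ.1
    calc (0 : ℝ) < ε ^ p * C * σ := by positivity
    _ ≤ H1 σ := h
  -- weighted derivative facts on [τ, σ₁]
  have hFd : ∀ σ ∈ Icc τ σ₁,
      HasDerivAt (fun s => s ^ a * H1 s) (a * σ ^ (a - 1) * H1 σ + σ ^ a * H2 σ) σ := by
    intro σ hσ
    have hσpos : 0 < σ := lt_of_lt_of_le hτpos hσ.1
    exact (Real.hasDerivAt_rpow_const (Or.inl hσpos.ne')).mul (hH σ (hsub hσ)).2.1
  have hFlow : ∀ σ ∈ Icc τ σ₁,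
      C * (σ ^ a * H σ ^ p) ≤ a * σ ^ (a - 1) * H1 σ + σ ^ a * H2 σ := by
    intro σ hσ
    have hσpos : 0 < σ := lt_of_lt_of_le hτpos hσ.1
    have hODE := (hH σ (hsub hσ)).2.2.2.1
    have hσa : (0 : ℝ) < σ ^ a := Real.rpow_pos_of_pos hσpos a
    have e1 : σ ^ (a - 1) = σ ^ a / σ := Real.rpow_sub_one hσpos.ne' a
    have h5 : σ ^ a * (C * H σ ^ p) ≤ σ ^ a * (H2 σ + a * H1 σ / σ) :=
      mul_le_mul_of_nonneg_left hODE hσa.le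
    have e2 : σ ^ a * (H2 σ + a * H1 σ / σ) = a * σ ^ (a - 1) * H1 σ + σ ^ a * H2 σ := by
      rw [e1]; field_simp; ring
    rw [e2] at h5
    linarith [h5]
  -- integrated inequality: F² dominates the potential
  have hFsq : ∀ σ ∈ Icc τ σ₁,
      2 * C / (p + 1) * (τ ^ a * τ ^ a) * (H σ ^ (p + 1) - H τ ^ (p + 1)) ≤
        (σ ^ a * H1 σ) * (σ ^ a * H1 σ) := by
    intro σ hσ
    have hsub2 : Icc τ σ ⊆ Icc τ σ₁ := Icc_subset_Icc le_rfl hσ.2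
    have hmono := mono_aux
      (f := fun s => s ^ a * H1 s * (s ^ a * H1 s) -
        2 * C / (p + 1) * (τ ^ a * τ ^ a) * H s ^ (p + 1))
      (f' := fun s =>
        ((a * s ^ (a - 1) * H1 s + s ^ a * H2 s) * (s ^ a * H1 s) +
          (s ^ a * H1 s) * (a * s ^ (a - 1) * H1 s + s ^ a * H2 s)) -
        2 * C / (p + 1) * (τ ^ a * τ ^ a) * (H1 s * (p + 1) * H s ^ p))
      hσ.1 ?_ ?_
    · nlinarith [mul_self_nonneg (τ ^ a * H1 τ)]
    · intro s hs
      have hs' : s ∈ Icc τ σ₁ := hsub2 hs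
      refine ((hFd s hs').mul (hFd s hs')).sub ?_
      have hder := ((hH s (hsub hs')).1.rpow_const (p := p + 1) (Or.inr hp1)).const_mul
        (2 * C / (p + 1) * (τ ^ a * τ ^ a))
      have hpe : p + 1 - 1 = p := by ring
      rw [hpe] at hder
      exact hder
    · intro s hs
      have hs' : s ∈ Icc τ σ₁ := hsub2 hs
      have hspos : 0 < s := lt_of_lt_of_le hτpos hs'.1
      have hFl := hFlow s hs'
      have hH1p : 0 < H1 s := hH1pos s (hsub hs')
      have hHp0 : 0 ≤ H s ^ p := Real.rpow_nonneg (hH s (hsub hs')).2.2.1 p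
      have hτa0 : 0 ≤ τ ^ a := (Real.rpow_pos_of_pos hτpos a).le
      have hτa_le : τ ^ a ≤ s ^ a := Real.rpow_le_rpow hτpos.le hs'.1 (by linarith)
      have hsa0 : 0 ≤ s ^ a := (Real.rpow_pos_of_pos hspos a).le
      have hF0 : 0 ≤ s ^ a * H1 s := mul_nonneg hsa0 hH1p.le
      have e : 2 * C / (p + 1) * (τ ^ a * τ ^ a) * (H1 s * (p + 1) * H s ^ p) =
          2 * C * (τ ^ a * τ ^ a) * (H s ^ p * H1 s) := by
        field_simp
      have k1 : C * (s ^ a * H s ^ p) * (s ^ a * H1 s) ≤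
          (a * s ^ (a - 1) * H1 s + s ^ a * H2 s) * (s ^ a * H1 s) :=
        mul_le_mul_of_nonneg_right hFl hF0
      have k2 : C * (τ ^ a * τ ^ a) * (H s ^ p * H1 s) ≤
          C * (s ^ a * s ^ a) * (H s ^ p * H1 s) := by
        have h2 : τ ^ a * τ ^ a ≤ s ^ a * s ^ a := mul_le_mul hτa_le hτa_le hτa0 hsa0
        have h3 : 0 ≤ H s ^ p * H1 s := mul_nonneg hHp0 hH1p.le
        calc C * (τ ^ a * τ ^ a) * (H s ^ p * H1 s)
            = C * (τ ^ a * τ ^ a * (H s ^ p * H1 s)) := by ring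
          _ ≤ C * (s ^ a * s ^ a * (H s ^ p * H1 s)) :=
            mul_le_mul_of_nonneg_left (mul_le_mul_of_nonneg_right h2 h3) hC.le
          _ = C * (s ^ a * s ^ a) * (H s ^ p * H1 s) := by ring
      have k3 : C * (s ^ a * H s ^ p) * (s ^ a * H1 s) =
          C * (s ^ a * s ^ a) * (H s ^ p * H1 s) := by ring
      rw [e]
      linarith [k1, k2, k3]
  -- monotonicity of H on [τ, σ₁]
  have hHmono : ∀ x y : ℝ, x ∈ Icc τ σ₁ → y ∈ Icc τ σ₁ → x ≤ y → H x ≤ H y := by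
    intro x y hx hy hxy
    have hsub2 : Icc x y ⊆ Icc τ σ₁ := Icc_subset_Icc hx.1 hy.2
    exact mono_aux H H1 hxy (fun s hs => (hH s (hsub (hsub2 hs))).1)
      (fun s hs => (hH1pos s (hsub (hsub2 hs))).le)
  have hμmem : μ ∈ Icc τ σ₁ := ⟨hτμ, hμσ₁⟩
  have hτmem : τ ∈ Icc τ σ₁ := ⟨le_rfl, hτσ₁⟩
  have hσ₁mem : σ₁ ∈ Icc τ σ₁ := ⟨hτσ₁, le_rfl⟩
  -- lower bound on the gain G₀ at μ
  set G₀ : ℝ := ε ^ p * C * τ * (σ₁ / 4) with hG₀def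
  have hG₀pos : 0 < G₀ := by rw [hG₀def]; positivity
  have hGμ : G₀ ≤ H μ - H τ := by
    have hgrow := grow_aux H H1 (ε ^ p * C * τ) hτμ
      (fun s hs => (hH s (hsub ⟨hs.1, le_trans hs.2 hμσ₁⟩)).1)
      (fun s hs => by
        have hs' : s ∈ Icc τ σ₁ := ⟨hs.1, le_trans hs.2 hμσ₁⟩
        have h6 := (hH s (hsub hs')).2.2.2.2.2
        have : ε ^ p * C * τ ≤ ε ^ p * C * s :=
          mul_le_mul_of_nonneg_left hs.1 (by positivity)
        linarith)
    have hμτ4 : μ - τ = σ₁ / 4 := by rw [hμdef, hτdef]; ring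
    rw [hμτ4] at hgrow
    rw [hG₀def]; linarith
  have hGlow : ∀ σ ∈ Icc μ σ₁, G₀ ≤ H σ - H τ := by
    intro σ hσ
    have : H μ ≤ H σ := hHmono μ σ hμmem ⟨le_trans hτμ hσ.1, hσ.2⟩ hσ.1
    linarith
  have hHτpos : 0 < H τ := by
    have h5 := (hH τ (hsub hτmem)).2.2.2.2.1
    calc (0:ℝ) < ε ^ p * C * τ ^ 2 := by positivity
    _ ≤ H τ := h5
  -- the Riccati-type lower bound on H1
  have hRic : ∀ σ ∈ Icc μ σ₁, c₁ * (H σ - H τ) ^ q ≤ H1 σ := by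
    intro σ hσ
    have hσJ : σ ∈ Icc τ σ₁ := ⟨le_trans hτμ hσ.1, hσ.2⟩
    have hσpos : 0 < σ := lt_of_lt_of_le hτpos hσJ.1
    have hσa : (0:ℝ) < σ ^ a := Real.rpow_pos_of_pos hσpos a
    have hGpos : 0 < H σ - H τ := lt_of_lt_of_le hG₀pos (hGlow σ hσ)
    have hH1σ : 0 < H1 σ := hH1pos σ (hsub hσJ)
    have hsup : (H σ - H τ) ^ (p + 1) + H τ ^ (p + 1) ≤ H σ ^ (p + 1) := by
      have h := superadd hGpos hHτpos hp1
      rw [sub_add_cancel] at h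
      exact h
    have h1 : 2 * C / (p + 1) * (τ ^ a * τ ^ a) * ((H σ - H τ) ^ (p + 1)) ≤
        (σ ^ a * H1 σ) * (σ ^ a * H1 σ) := by
      refine le_trans ?_ (hFsq σ hσJ)
      apply mul_le_mul_of_nonneg_left (by linarith)
      have := Real.rpow_pos_of_pos hτpos a
      positivity
    have e3 : (1 / 2 : ℝ) ^ a * σ ^ a ≤ τ ^ a := by
      rw [← Real.mul_rpow (by norm_num) hσpos.le]
      apply Real.rpow_le_rpow (by positivity) _ (by linarith)
      have := hσJ.2
      rw [hτdef]; nlinarith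
    have hGq2 : (H σ - H τ) ^ q * (H σ - H τ) ^ q = (H σ - H τ) ^ (p + 1) := by
      rw [← Real.rpow_add hGpos]
      congr 1
      rw [hqdef]; ring
    have hhalf : (0:ℝ) < (1/2:ℝ) ^ a := Real.rpow_pos_of_pos one_half_pos a
    have hGqpos : 0 < (H σ - H τ) ^ q := Real.rpow_pos_of_pos hGpos q
    have ec : c₁ ^ 2 = 2 * C / (p + 1) * ((1/2:ℝ) ^ a * (1/2:ℝ) ^ a) := by
      rw [hc₁def, mul_pow, Real.sq_sqrt (by positivity)]
      ring
    have hsq2 : (c₁ * (H σ - H τ) ^ q * σ ^ a) ^ 2 ≤ (σ ^ a * H1 σ) ^ 2 := by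
      calc (c₁ * (H σ - H τ) ^ q * σ ^ a) ^ 2
          = c₁ ^ 2 * ((H σ - H τ) ^ q * (H σ - H τ) ^ q) * (σ ^ a * σ ^ a) := by ring
        _ = 2 * C / (p + 1) * (((1/2:ℝ) ^ a * σ ^ a) * ((1/2:ℝ) ^ a * σ ^ a)) *
            ((H σ - H τ) ^ (p + 1)) := by rw [ec, hGq2]; ring
        _ ≤ 2 * C / (p + 1) * (τ ^ a * τ ^ a) * ((H σ - H τ) ^ (p + 1)) := by
          have hfac : ((1/2:ℝ) ^ a * σ ^ a) * ((1/2:ℝ) ^ a * σ ^ a) ≤ τ ^ a * τ ^ a :=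
            mul_le_mul e3 e3 (by positivity) (by positivity)
          have hc0 : (0:ℝ) ≤ 2 * C / (p + 1) := by positivity
          have hG0 : (0:ℝ) ≤ (H σ - H τ) ^ (p + 1) := (Real.rpow_pos_of_pos hGpos _).le
          calc 2 * C / (p + 1) * (((1/2:ℝ) ^ a * σ ^ a) * ((1/2:ℝ) ^ a * σ ^ a)) *
              ((H σ - H τ) ^ (p + 1))
              = 2 * C / (p + 1) * ((((1/2:ℝ) ^ a * σ ^ a) * ((1/2:ℝ) ^ a * σ ^ a)) *
                ((H σ - H τ) ^ (p + 1))) := by ring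
            _ ≤ 2 * C / (p + 1) * ((τ ^ a * τ ^ a) * ((H σ - H τ) ^ (p + 1))) :=
              mul_le_mul_of_nonneg_left (mul_le_mul_of_nonneg_right hfac hG0) hc0
            _ = 2 * C / (p + 1) * (τ ^ a * τ ^ a) * ((H σ - H τ) ^ (p + 1)) := by ring
        _ ≤ (σ ^ a * H1 σ) ^ 2 := by rw [sq]; exact h1
    have hfin : c₁ * (H σ - H τ) ^ q * σ ^ a ≤ σ ^ a * H1 σ := by
      have h0l : 0 ≤ c₁ * (H σ - H τ) ^ q * σ ^ a := by positivity
      have h0r : 0 ≤ σ ^ a * H1 σ := by positivity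
      calc c₁ * (H σ - H τ) ^ q * σ ^ a
          = Real.sqrt ((c₁ * (H σ - H τ) ^ q * σ ^ a) ^ 2) := (Real.sqrt_sq h0l).symm
        _ ≤ Real.sqrt ((σ ^ a * H1 σ) ^ 2) := Real.sqrt_le_sqrt hsq2
        _ = σ ^ a * H1 σ := Real.sqrt_sq h0r
    have := (mul_le_mul_iff_of_pos_right hσa).mp (by
      calc c₁ * (H σ - H τ) ^ q * σ ^ a ≤ σ ^ a * H1 σ := hfin
      _ = H1 σ * σ ^ a := by ring)
    exact this
  -- Riccati comparison on [μ, σ₁]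
  have hGposOn : ∀ σ ∈ Icc μ σ₁, 0 < H σ - H τ :=
    fun σ hσ => lt_of_lt_of_le hG₀pos (hGlow σ hσ)
  have hψd : ∀ σ ∈ Icc μ σ₁,
      HasDerivAt (fun s => -((H s - H τ) ^ (-β)))
        (β * (H σ - H τ) ^ (-β - 1) * H1 σ) σ := by
    intro σ hσ
    have hσJ : σ ∈ Icc τ σ₁ := ⟨le_trans hτμ hσ.1, hσ.2⟩
    have hGpos := hGposOn σ hσ
    have h := (((hH σ (hsub hσJ)).1).sub_const (H τ)).rpow_const (p := -β)
      (Or.inl hGpos.ne')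
    have h2 := h.neg
    convert h2 using 1
    · rfl
    · rfl
    · rfl
    ring
  have hψ' : ∀ σ ∈ Icc μ σ₁, β * c₁ ≤ β * (H σ - H τ) ^ (-β - 1) * H1 σ := by
    intro σ hσ
    have hGpos := hGposOn σ hσ
    have hR := hRic σ hσ
    have hGm : 0 < (H σ - H τ) ^ (-β - 1) := Real.rpow_pos_of_pos hGpos _
    have key : (H σ - H τ) ^ (-β - 1) * (H σ - H τ) ^ q = 1 := by
      rw [← Real.rpow_add hGpos]
      rw [show -β - 1 + q = 0 by rw [hβdef, hqdef]; ring, Real.rpow_zero]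
    calc β * c₁ = β * ((H σ - H τ) ^ (-β - 1) * (c₁ * (H σ - H τ) ^ q)) := by
          rw [show (H σ - H τ) ^ (-β - 1) * (c₁ * (H σ - H τ) ^ q) =
            c₁ * ((H σ - H τ) ^ (-β - 1) * (H σ - H τ) ^ q) from by ring, key]
          ring
      _ ≤ β * ((H σ - H τ) ^ (-β - 1) * H1 σ) :=
          mul_le_mul_of_nonneg_left (mul_le_mul_of_nonneg_left hR hGm.le) hβ.le
      _ = β * (H σ - H τ) ^ (-β - 1) * H1 σ := by ring
  have hgrow2 := grow_aux (fun s => -((H s - H τ) ^ (-β)))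
    (fun s => β * (H s - H τ) ^ (-β - 1) * H1 s) (β * c₁) hμσ₁ hψd hψ'
  have hμmem2 : μ ∈ Icc μ σ₁ := ⟨le_rfl, hμσ₁⟩
  have hσ₁mem2 : σ₁ ∈ Icc μ σ₁ := ⟨hμσ₁, le_rfl⟩
  have hGμpos := hGposOn μ hμmem2
  have hGσ₁pos := hGposOn σ₁ hσ₁mem2
  have hpos1 : 0 < (H σ₁ - H τ) ^ (-β) := Real.rpow_pos_of_pos hGσ₁pos _
  have h7 : β * c₁ * (σ₁ - μ) ≤ (H μ - H τ) ^ (-β) := by linarith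
  have h8 : (H μ - H τ) ^ (-β) ≤ G₀ ^ (-β) :=
    Real.rpow_le_rpow_of_nonpos hG₀pos (hGlow μ hμmem2) (by linarith)
  -- final numeric contradiction
  have hG₀β : 0 < G₀ ^ β := Real.rpow_pos_of_pos hG₀pos β
  have hG₀mβ : 0 < G₀ ^ (-β) := Real.rpow_pos_of_pos hG₀pos _
  have hcancel : G₀ ^ (-β) * G₀ ^ β = 1 := by
    rw [← Real.rpow_add hG₀pos, neg_add_cancel, Real.rpow_zero]
  have hεpβ : (ε ^ p) ^ β * (ε ^ p) ^ (-β) = 1 := by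
    rw [← Real.rpow_add hεp, add_neg_cancel, Real.rpow_zero]
  have key2 : 2 ≤ β * c₁ * (σ₁ / 4) * G₀ ^ β := by
    have e4 : G₀ = ε ^ p * (C / 8) * (σ₁ * σ₁) := by rw [hG₀def, hτdef]; ring
    have e5 : G₀ ^ β = (ε ^ p) ^ β * (C / 8) ^ β * (σ₁ ^ β * σ₁ ^ β) := by
      rw [e4, Real.mul_rpow (by positivity) (by positivity),
        Real.mul_rpow (by positivity) (by positivity),
        Real.mul_rpow hσ₁pos.le hσ₁pos.le]
    have e6 : σ₁ * (σ₁ ^ β * σ₁ ^ β) = σ₁ ^ p := by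
      nth_rewrite 1 [← Real.rpow_one σ₁]
      rw [← Real.rpow_add hσ₁pos, ← Real.rpow_add hσ₁pos]
      congr 1
      rw [hβdef]; ring
    have e7 : σ₁ ^ p = C'' ^ p * (ε ^ p) ^ (-β) := by
      rw [hσ₁def, hεβ, Real.mul_rpow hC''pos.le (Real.rpow_pos_of_pos hε _).le]
      rw [← Real.rpow_mul hε.le, ← Real.rpow_mul hε.le]
      congr 1
      ring
    have hC''1 : (1:ℝ) ≤ C'' := by linarith
    have hC''p : C'' ≤ C'' ^ p := by
      calc C'' = C'' ^ (1:ℝ) := (Real.rpow_one _).symm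
      _ ≤ C'' ^ p := Real.rpow_le_rpow_of_exponent_le hC''1 hp.le
    have h8K : 8 ≤ K * C'' := by
      have := (div_le_iff₀ hK).mp hC''K
      linarith
    have emain : β * c₁ * (σ₁ / 4) * G₀ ^ β = K / 4 * C'' ^ p := by
      rw [e5]
      calc β * c₁ * (σ₁ / 4) * ((ε ^ p) ^ β * (C / 8) ^ β * (σ₁ ^ β * σ₁ ^ β))
          = β * c₁ * (C / 8) ^ β / 4 * ((ε ^ p) ^ β * (σ₁ * (σ₁ ^ β * σ₁ ^ β))) := by ring
        _ = β * c₁ * (C / 8) ^ β / 4 * ((ε ^ p) ^ β * (C'' ^ p * (ε ^ p) ^ (-β))) := by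
            rw [e6, e7]
        _ = β * c₁ * (C / 8) ^ β / 4 * C'' ^ p * ((ε ^ p) ^ β * (ε ^ p) ^ (-β)) := by ring
        _ = K / 4 * C'' ^ p := by rw [hεpβ, hKdef]; ring
    rw [emain]
    calc (2:ℝ) = K * (8 / K) / 4 := by field_simp; ring
    _ ≤ K * C'' / 4 := by
        have := mul_le_mul_of_nonneg_left hC''K hK.le
        linarith
    _ ≤ K / 4 * C'' ^ p := by
        have := mul_le_mul_of_nonneg_left hC''p hK.le
        linarith
  have hσ₁μ4 : σ₁ - μ = σ₁ / 4 := by rw [hμdef]; ring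
  have h9 : 2 * G₀ ^ (-β) ≤ β * c₁ * (σ₁ / 4) := by
    have := mul_le_mul_of_nonneg_right key2 hG₀mβ.le
    calc 2 * G₀ ^ (-β) ≤ β * c₁ * (σ₁ / 4) * G₀ ^ β * G₀ ^ (-β) := this
    _ = β * c₁ * (σ₁ / 4) * (G₀ ^ (-β) * G₀ ^ β) := by ring
    _ = β * c₁ * (σ₁ / 4) := by rw [hcancel]; ring
  rw [hσ₁μ4] at h7
  linarith
end
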